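/- arXiv:2404.10151 — 2 statements merged into one kernel-verified Lean document; each statement's English description precedes it below -/
import Mathlib

section
/- Replay placement when the successor has a smaller timestamp (paper's Lemma: 'if A→B with A.ts > B.ts, then ReplicateInsertAfter(A,C) must insert C after A but before B'): Let S ⊆ {1, …, k} be parent-closed, let a ∈ S ∪ {0}, and suppose that in build S the element b immediately following a satisfies b < a. Then for every x ∈ {1, …, k} with x ∉ S and p x = a, the element x occurs immediately after a (hence strictly between a and b) in build (S ∪ {x}). -/
/-- Insert `x` immediately after the (first) occurrence of `a` in the list. -/
def insertAfter (a x : ℕ) : List ℕ → List ℕ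
  | [] => []
  | b :: t => if b = a then b :: x :: t else b :: insertAfter a x t

/-- The sequential construction: `L 0 = [0]`, `L (i+1) = insertAfter (p (i+1)) (i+1) (L i)`. -/
def buildL (p : ℕ → ℕ) : ℕ → List ℕ
  | 0 => [0]
  | i + 1 => insertAfter (p (i + 1)) (i + 1) (buildL p i)

/-- Insert `x` into a list by timestamp: skip all elements greater than `x`,
and insert `x` before the first element smaller (or equal), or at the end. -/
def insertByTS (x : ℕ) : List ℕ → List ℕ
  | [] => [x]
  | b :: t => if x < b then b :: insertByTS x t else x :: b :: t

/-- The timestamp-guided replay insertion: scan right from the occurrence of `a`,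
skip all elements with timestamp greater than `x`, and insert `x` before the
first element with smaller timestamp (or at the end). -/
def replayInsert (a x : ℕ) : List ℕ → List ℕ
  | [] => []
  | b :: t => if b = a then b :: insertByTS x t else b :: replayInsert a x t

/-- `buildSet p S` performs the insertion events of `S` in increasing order of
timestamp, starting from `[0]`. -/
def buildSet (p : ℕ → ℕ) (S : Finset ℕ) : List ℕ :=
  (S.sort (· ≤ ·)).foldl (fun M i => insertAfter (p i) i M) [0]

/-- `i` is an ancestor of `j` (equivalently `j` a descendant of `i`): iterating the
parent map `p` (extended by `p 0 = 0`) starting from `j` reaches `i`. -/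
def isAncestor (p : ℕ → ℕ) (i j : ℕ) : Prop :=
  ∃ n : ℕ, (fun m => if m = 0 then 0 else p m)^[n] j = i

/-
Since `b < a` follows `a` in `build S`, the element `a` has no child in `S`: once a child of `a`
is inserted, the successor of `a` is always its latest child, which is larger than `a`. Hence
inserting `x` after `a` commutes with every later event of `S` (none of them is inserted after `a`
or after `x`), so `build (S ∪ {x})` is `build S` with `x` inserted right after `a`.
-/

theorem Finset.sort_insert_of_forall_lt {α : Type*} [LinearOrder α] {s : Finset α} {a : α}
    (h : ∀ b ∈ s, b < a) : (insert a s).sort (· ≤ ·) = s.sort (· ≤ ·) ++ [a] := by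
  refine List.Subset.antisymm_of_pairwise (r := (· < ·)) (sortedLT_sort _).pairwise
    (List.pairwise_append.2 ⟨(sortedLT_sort _).pairwise, by simp, ?_⟩) ?_ ?_
  · simpa using h
  · intro y; simp [or_comm]
  · intro y; simp [or_comm]

theorem insertAfter_append_cons {a : ℕ} (x : ℕ) {u : List ℕ} (h : a ∉ u) (v : List ℕ) :
    insertAfter a x (u ++ a :: v) = u ++ a :: x :: v := by
  induction u with
  | nil => simp [insertAfter]
  | cons b u ih => simp_all [insertAfter, Ne.symm]

theorem insertAfter_perm {a : ℕ} (x : ℕ) {M : List ℕ} (h : a ∈ M) :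
    (insertAfter a x M).Perm (x :: M) := by
  induction M with
  | nil => cases h
  | cons b t ih =>
    unfold insertAfter
    split_ifs with hb
    · exact .swap x b t
    · exact ((ih (by simp_all [eq_comm])).cons b).trans (.swap x b t)

theorem insertAfter_comm {a c x y : ℕ} (hca : c ≠ a) (hcx : c ≠ x) (hya : y ≠ a) (M : List ℕ) :
    insertAfter c y (insertAfter a x M) = insertAfter a x (insertAfter c y M) := by
  induction M with
  | nil => rfl
  | cons b t ih =>
    by_cases hba : b = a
    · subst hba
      simp [insertAfter, hcx.symm, Ne.symm hca]
    · by_cases hbc : b = c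
      · subst hbc
        simp [insertAfter, hba, hya]
      · simp [insertAfter, hba, hbc, ih]

theorem exists_insertAfter_eq_append_cons_cons {a c : ℕ} (y d : ℕ) (hc : c ≠ a)
    (u v : List ℕ) : ∃ u' v', insertAfter c y (u ++ a :: d :: v) = u' ++ a :: d :: v' := by
  induction u with
  | nil =>
    by_cases hd : d = c
    · exact ⟨[], y :: v, by simp [insertAfter, hc.symm, hd]⟩
    · exact ⟨[], insertAfter c y v, by simp [insertAfter, hc.symm, hd]⟩
  | cons b u ih =>
    by_cases hb : b = c
    · exact ⟨b :: y :: u, v, by simp [insertAfter, hb]⟩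
    · obtain ⟨u', v', h⟩ := ih
      exact ⟨b :: u', v', by simp [insertAfter, hb, h]⟩

theorem List.notMem_of_nodup_append_cons {α : Type*} {a : α} {u v : List α}
    (h : (u ++ a :: v).Nodup) : a ∉ u :=
  fun hu => (List.nodup_middle.1 h).notMem (List.mem_append_left v hu)

theorem List.exists_append_cons_notMem_of_nodup {α : Type*} {a : α} {M : List α} (hM : M.Nodup)
    (h : a ∈ M) : ∃ u v, a ∉ u ∧ M = u ++ a :: v := by
  obtain ⟨u, v, rfl⟩ := List.append_of_mem h
  exact ⟨u, v, List.notMem_of_nodup_append_cons hM, rfl⟩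

theorem List.eq_of_nodup_append_cons_cons {α : Type*} {a b d : α} {u v u' v' : List α}
    (hM : (u ++ a :: b :: v).Nodup) (h : u ++ a :: b :: v = u' ++ a :: d :: v') : b = d := by
  have ha := (List.nodup_middle.1 hM).notMem
  rw [List.mem_append, not_or] at ha
  exact (List.cons.inj ((List.append_cons_inj_of_notMem ha.1 ha.2).1 h).2.2).1

section BuildSet

variable {p : ℕ → ℕ}

theorem buildSet_insert_of_forall_lt {S : Finset ℕ} {m : ℕ} (h : ∀ j ∈ S, j < m) :
    buildSet p (insert m S) = insertAfter (p m) m (buildSet p S) := by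
  rw [buildSet, Finset.sort_insert_of_forall_lt h, List.foldl_concat]
  rfl

theorem parent_mem_of_mem_insert_max {S : Finset ℕ} {m : ℕ} (hm : ∀ j ∈ S, j < m)
    (hp : ∀ i ∈ insert m S, p i < i) (hclosed : ∀ i ∈ insert m S, p i = 0 ∨ p i ∈ insert m S)
    {i : ℕ} (hi : i ∈ insert m S) : p i = 0 ∨ p i ∈ S := by
  have hpi := hp i hi
  have him : i ≤ m := (Finset.mem_insert.1 hi).elim (·.le) (hm i · |>.le)
  exact (hclosed i hi).imp_right fun h => (Finset.mem_insert.1 h).resolve_left (by omega)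

theorem parentClosed_of_insert_max {S : Finset ℕ} {m : ℕ} (hm : ∀ j ∈ S, j < m)
    (hp : ∀ i ∈ insert m S, p i < i) (hclosed : ∀ i ∈ insert m S, p i = 0 ∨ p i ∈ insert m S) :
    (∀ i ∈ S, p i < i) ∧ ∀ i ∈ S, p i = 0 ∨ p i ∈ S :=
  ⟨fun i hi => hp i (Finset.mem_insert_of_mem hi),
    fun _ hi => parent_mem_of_mem_insert_max hm hp hclosed (Finset.mem_insert_of_mem hi)⟩

theorem mem_buildSet {S : Finset ℕ} (hp : ∀ i ∈ S, p i < i)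
    (hclosed : ∀ i ∈ S, p i = 0 ∨ p i ∈ S) {y : ℕ} : y ∈ buildSet p S ↔ y = 0 ∨ y ∈ S := by
  induction S using Finset.induction_on_max generalizing y with
  | empty => simp [buildSet]
  | insert m T hm ih =>
    obtain ⟨hpT, hclosedT⟩ := parentClosed_of_insert_max hm hp hclosed
    have ih : ∀ {y}, y ∈ buildSet p T ↔ y = 0 ∨ y ∈ T := ih hpT hclosedT
    have hpm : p m ∈ buildSet p T :=
      ih.2 (parent_mem_of_mem_insert_max hm hp hclosed (Finset.mem_insert_self m T))
    rw [buildSet_insert_of_forall_lt hm, (insertAfter_perm m hpm).mem_iff, List.mem_cons, ih,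
      Finset.mem_insert]
    tauto

theorem nodup_buildSet {S : Finset ℕ} (hp : ∀ i ∈ S, p i < i)
    (hclosed : ∀ i ∈ S, p i = 0 ∨ p i ∈ S) : (buildSet p S).Nodup := by
  induction S using Finset.induction_on_max with
  | empty => simp [buildSet]
  | insert m T hm ih =>
    obtain ⟨hpT, hclosedT⟩ := parentClosed_of_insert_max hm hp hclosed
    have hpm : p m ∈ buildSet p T := (mem_buildSet hpT hclosedT).2
      (parent_mem_of_mem_insert_max hm hp hclosed (Finset.mem_insert_self m T))
    have hmT : m ∉ buildSet p T := by
      have := hp m (Finset.mem_insert_self m T)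
      rw [mem_buildSet hpT hclosedT]
      rintro (h | h)
      · omega
      · exact lt_irrefl m (hm m h)
    rw [buildSet_insert_of_forall_lt hm]
    exact (insertAfter_perm m hpm).nodup_iff.2 (List.nodup_cons.2 ⟨hmT, ih hpT hclosedT⟩)

theorem exists_lt_succ_of_mem {S : Finset ℕ} (hp : ∀ i ∈ S, p i < i)
    (hclosed : ∀ i ∈ S, p i = 0 ∨ p i ∈ S) {j : ℕ} (hj : j ∈ S) :
    ∃ d u v, p j < d ∧ buildSet p S = u ++ p j :: d :: v := by
  induction S using Finset.induction_on_max generalizing j with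
  | empty => simp at hj
  | insert m T hm ih =>
    obtain ⟨hpT, hclosedT⟩ := parentClosed_of_insert_max hm hp hclosed
    have hpm : p m ∈ buildSet p T := (mem_buildSet hpT hclosedT).2
      (parent_mem_of_mem_insert_max hm hp hclosed (Finset.mem_insert_self m T))
    rw [buildSet_insert_of_forall_lt hm]
    by_cases hjm : p m = p j
    · obtain ⟨u, v, hu, huv⟩ :=
        List.exists_append_cons_notMem_of_nodup (nodup_buildSet hpT hclosedT) hpm
      refine ⟨m, u, v, hjm ▸ hp m (Finset.mem_insert_self m T), ?_⟩
      rw [huv, insertAfter_append_cons m hu, hjm]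
    · have hjT : j ∈ T := (Finset.mem_insert.1 hj).resolve_left (by rintro rfl; exact hjm rfl)
      obtain ⟨d, u, v, hd, huv⟩ := ih hpT hclosedT hjT
      obtain ⟨u', v', h⟩ := exists_insertAfter_eq_append_cons_cons m d hjm u v
      exact ⟨d, u', v', hd, by rw [huv, h]⟩

theorem buildSet_insert_eq_insertAfter {S : Finset ℕ} {x : ℕ} (hx : x ∉ S)
    (hcomm : ∀ j ∈ S, x < j → p j ≠ p x ∧ p j ≠ x ∧ j ≠ p x) :
    buildSet p (insert x S) = insertAfter (p x) x (buildSet p S) := by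
  induction S using Finset.induction_on_max with
  | empty => exact buildSet_insert_of_forall_lt (by simp)
  | insert m T hm ih =>
    have hxT : x ∉ T := fun h => hx (Finset.mem_insert_of_mem h)
    rcases lt_or_gt_of_ne (ne_of_mem_of_not_mem (Finset.mem_insert_self m T) hx) with
      hmx | hxm
    · refine buildSet_insert_of_forall_lt fun j hj => ?_
      rcases Finset.mem_insert.1 hj with rfl | hj
      · exact hmx
      · exact (hm j hj).trans hmx
    · obtain ⟨hpm, hpmx, hmpx⟩ := hcomm m (Finset.mem_insert_self m T) hxm
      have hmax : ∀ j ∈ insert x T, j < m := by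
        simpa only [Finset.mem_insert, forall_eq_or_imp] using ⟨hxm, hm⟩
      rw [Finset.insert_comm, buildSet_insert_of_forall_lt hmax,
        ih hxT fun j hj => hcomm j (Finset.mem_insert_of_mem hj),
        insertAfter_comm hpm hpmx hmpx, buildSet_insert_of_forall_lt hm]

end BuildSet

theorem replay_placement_smaller_successor_general
    (k : ℕ) (p : ℕ → ℕ) (hp : ∀ i, 1 ≤ i → i ≤ k → p i < i)
    (S : Finset ℕ) (hS : S ⊆ Finset.Icc 1 k)
    (hclosed : ∀ i ∈ S, p i = 0 ∨ p i ∈ S)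
    (a b : ℕ)
    (u v : List ℕ) (hsplit : buildSet p S = u ++ a :: b :: v) (hba : b < a)
    (x : ℕ) (hx : x ∈ Finset.Icc 1 k) (hxS : x ∉ S) (hpx : p x = a) :
    buildSet p (insert x S) = u ++ a :: x :: b :: v := by
  have hpS : ∀ i ∈ S, p i < i := fun i hi =>
    hp i (Finset.mem_Icc.1 (hS hi)).1 (Finset.mem_Icc.1 (hS hi)).2
  obtain ⟨hx1, hxk⟩ := Finset.mem_Icc.1 hx
  have hax : a < x := hpx ▸ hp x hx1 hxk
  have hnodup : (u ++ a :: b :: v).Nodup := hsplit ▸ nodup_buildSet hpS hclosed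
  have hno_child : ∀ j ∈ S, p j ≠ a := by
    rintro j hj rfl
    obtain ⟨d, u', v', hd, hsplit'⟩ := exists_lt_succ_of_mem hpS hclosed hj
    have := List.eq_of_nodup_append_cons_cons hnodup (hsplit.symm.trans hsplit')
    omega
  have hcomm : ∀ j ∈ S, x < j → p j ≠ p x ∧ p j ≠ x ∧ j ≠ p x := by
    intro j hj hxj
    refine ⟨hpx ▸ hno_child j hj, fun hjx => ?_, by omega⟩
    rcases hclosed j hj with h | h
    · omega
    · exact hxS (hjx ▸ h)
  rw [buildSet_insert_eq_insertAfter hxS hcomm, hsplit, hpx,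
    insertAfter_append_cons x (List.notMem_of_nodup_append_cons hnodup)]

/-- Replay placement when the successor has a smaller timestamp: if in
`build S` the element `b` immediately following `a` satisfies `b < a`, then
inserting an event `x ∉ S` with parent `a` places `x` immediately after `a`
(hence strictly between `a` and `b`) in `build (S ∪ {x})`. -/
theorem replay_placement_smaller_successor
    (k : ℕ) (p : ℕ → ℕ) (hp : ∀ i, 1 ≤ i → i ≤ k → p i < i)
    (S : Finset ℕ) (hS : S ⊆ Finset.Icc 1 k)
    (hclosed : ∀ i ∈ S, p i = 0 ∨ p i ∈ S)
    (a b : ℕ) (ha : a = 0 ∨ a ∈ S)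
    (u v : List ℕ) (hsplit : buildSet p S = u ++ a :: b :: v) (hba : b < a)
    (x : ℕ) (hx : x ∈ Finset.Icc 1 k) (hxS : x ∉ S) (hpx : p x = a) :
    buildSet p (insert x S) = u ++ a :: x :: b :: v :=
  replay_placement_smaller_successor_general k p hp S hS hclosed a b u v hsplit hba x hx hxS hpx
end

section
/- Parents precede children in list order (underlying the paper's Lemma that a ReplicateInsertAfter(A,C) message implies A.ts < C.ts, together with the fact that InsertAfter only inserts to the right): For every i ∈ {1, …, k}, the parent p i occurs strictly before i in the final list L k (and more generally in every L m with m ≥ i). -/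
/-!
`insertAfter` only adds an element and never reorders, so `L i` is a sublist of `L m` for
`i ≤ m`. Right after event `i`, the parent `p i` (present in `L (i - 1)` because `p i < i`)
sits immediately before `i`, so `[p i, i]` is a sublist of `L i`, hence of `L m`. Each event
inserts a timestamp larger than every entry present, so `L m` has no duplicates, and in a
duplicate-free list the first-occurrence indices respect sublist order.
-/

theorem List.idxOf_lt_idxOf_of_pair_sublist {α : Type*} [DecidableEq α] {a b : α} {L : List α}
    (h : [a, b].Sublist L) (hL : L.Nodup) : L.idxOf a < L.idxOf b := by
  induction L with
  | nil => simp at h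
  | cons c t ih =>
    obtain ⟨hc, ht⟩ := List.nodup_cons.1 hL
    have hb : b ∈ t → c ≠ b := fun hb e => hc (e ▸ hb)
    cases h with
    | cons _ h =>
      have ha : c ≠ a := fun e => hc (e ▸ h.mem (by simp))
      rw [List.idxOf_cons_ne _ ha, List.idxOf_cons_ne _ (hb (h.mem (by simp)))]
      exact Nat.succ_lt_succ (ih h ht)
    | cons_cons _ h =>
      rw [List.idxOf_cons_self, List.idxOf_cons_ne _ (hb (h.mem (by simp)))]
      exact Nat.succ_pos _

theorem sublist_insertAfter (a x : ℕ) (L : List ℕ) : L.Sublist (insertAfter a x L) := by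
  induction L with
  | nil => simp [insertAfter]
  | cons b t ih =>
    simp only [insertAfter]
    split
    · exact .cons_cons b (.cons x (.refl t))
    · exact .cons_cons b ih

theorem pair_sublist_insertAfter {a : ℕ} (x : ℕ) {L : List ℕ} (h : a ∈ L) :
    [a, x].Sublist (insertAfter a x L) := by
  induction L with
  | nil => simp at h
  | cons b t ih =>
    simp only [insertAfter]
    split
    case isTrue hba => exact hba ▸ .cons_cons b (.cons_cons x (List.nil_sublist t))
    case isFalse hba => exact .cons b (ih ((List.mem_cons.1 h).resolve_left (Ne.symm hba)))

theorem perm_insertAfter {a : ℕ} (x : ℕ) {L : List ℕ} (h : a ∈ L) :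
    (insertAfter a x L).Perm (x :: L) := by
  induction L with
  | nil => simp at h
  | cons b t ih =>
    simp only [insertAfter]
    split
    case isTrue => exact .swap x b t
    case isFalse hba =>
      exact ((ih ((List.mem_cons.1 h).resolve_left (Ne.symm hba))).cons b).trans (.swap x b t)

theorem insertAfter_of_not_mem {a : ℕ} (x : ℕ) {L : List ℕ} (h : a ∉ L) :
    insertAfter a x L = L := by
  induction L with
  | nil => rfl
  | cons b t ih =>
    rw [List.mem_cons, not_or] at h
    simp only [insertAfter, if_neg (Ne.symm h.1), ih h.2]

theorem insertAfter_subset (a x : ℕ) (L : List ℕ) : insertAfter a x L ⊆ x :: L := by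
  by_cases h : a ∈ L
  · exact (perm_insertAfter x h).subset
  · rw [insertAfter_of_not_mem x h]
    exact List.subset_cons_self x L

theorem nodup_insertAfter (a : ℕ) {x : ℕ} {L : List ℕ} (hL : L.Nodup) (hx : x ∉ L) :
    (insertAfter a x L).Nodup := by
  by_cases h : a ∈ L
  · exact (perm_insertAfter x h).nodup_iff.2 (List.nodup_cons.2 ⟨hx, hL⟩)
  · rwa [insertAfter_of_not_mem x h]

theorem le_of_mem_buildL {p : ℕ → ℕ} {n j : ℕ} (h : j ∈ buildL p n) : j ≤ n := by
  induction n with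
  | zero => simp_all [buildL]
  | succ n ih =>
    rcases List.mem_cons.1 (insertAfter_subset _ _ _ h) with h | h
    · exact h.le
    · exact (ih h).trans n.le_succ

theorem nodup_buildL (p : ℕ → ℕ) (n : ℕ) : (buildL p n).Nodup := by
  induction n with
  | zero => simp [buildL]
  | succ n ih => exact nodup_insertAfter _ ih fun h => by have := le_of_mem_buildL h; omega

theorem mem_buildL_of_le {p : ℕ → ℕ} {n j : ℕ} (hp : ∀ i, 1 ≤ i → i ≤ n → p i < i)
    (h : j ≤ n) : j ∈ buildL p n := by
  induction n generalizing j with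
  | zero => simp_all [buildL]
  | succ n ih =>
    have ih := fun {j} (hj : j ≤ n) => ih (fun i hi hin => hp i hi (by omega)) hj
    rcases h.lt_or_eq with h | rfl
    · exact (sublist_insertAfter _ _ _).mem (ih (by omega))
    · have hparent : p (n + 1) ≤ n := Nat.le_of_lt_succ (hp (n + 1) (by omega) le_rfl)
      exact (pair_sublist_insertAfter _ (ih hparent)).mem (by simp)

theorem buildL_sublist_buildL (p : ℕ → ℕ) {i m : ℕ} (h : i ≤ m) :
    (buildL p i).Sublist (buildL p m) :=
  Nat.le_induction (.refl _) (fun _ _ ih => ih.trans (sublist_insertAfter _ _ _)) m h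

theorem parent_precedes_general
    (k : ℕ) (p : ℕ → ℕ) (hp : ∀ i, 1 ≤ i → i ≤ k → p i < i)
    (i : ℕ) (h1 : 1 ≤ i) (h2 : i ≤ k)
    (m : ℕ) (hm1 : i ≤ m) :
    (buildL p m).idxOf (p i) < (buildL p m).idxOf i := by
  obtain ⟨j, rfl⟩ : ∃ j, i = j + 1 := ⟨i - 1, by omega⟩
  have hparent : p (j + 1) ∈ buildL p j :=
    mem_buildL_of_le (fun l hl hlj => hp l hl (by omega)) (by have := hp (j + 1) h1 h2; omega)
  have hpair : [p (j + 1), j + 1].Sublist (buildL p m) :=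
    (pair_sublist_insertAfter (j + 1) hparent).trans (buildL_sublist_buildL p hm1)
  exact List.idxOf_lt_idxOf_of_pair_sublist hpair (nodup_buildL p m)

/-- Parents precede children in list order: for every `i ∈ {1, …, k}`, the
parent `p i` occurs strictly before `i` in every `L m` with `i ≤ m ≤ k`
(in particular in the final list `L k`). -/
theorem parent_precedes
    (k : ℕ) (p : ℕ → ℕ) (hp : ∀ i, 1 ≤ i → i ≤ k → p i < i)
    (i : ℕ) (h1 : 1 ≤ i) (h2 : i ≤ k)
    (m : ℕ) (hm1 : i ≤ m) (hm2 : m ≤ k) :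
    (buildL p m).idxOf (p i) < (buildL p m).idxOf i :=
  parent_precedes_general k p hp i h1 h2 m hm1
end
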